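/- Let (R,B) be a ℤ-based rng and B' ⊆ B a closed subset. Then the ℤ-span of B ∖ B' is a module over the subring spanned by B' with respect to the multiplication of R; that is, for every b ∈ B' and every m ∈ B ∖ B', the product b·m lies in the ℤ-span of B ∖ B'. -/

import Mathlib

/-! Left multiplication by `b i` has the integer matrix `Lᵢ = (N i r m)_{m,r}`. The trace
form `τ` identifies `Lᵢᵀ` with `L_{σ i}`, and `Lᵢ` commutes with `L_{σ i}` because `R` is
commutative and associative; so `Lᵢ` is a normal matrix. If `i ∈ B'` and `B'` is closed, `Lᵢ` is
block upper triangular with respect to `B' ⊔ B'ᶜ`. Comparing the traces of the `B'`-diagonal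
blocks of `Lᵢ Lᵢᵀ` and `Lᵢᵀ Lᵢ` shows that the sum of squares of the entries of the off-diagonal
block vanishes, so `Lᵢ` is block diagonal, which is the claim. -/

open Module Finset Matrix

namespace Matrix

variable {ι R : Type*} [Fintype ι] [CommRing R] [LinearOrder R] [IsStrictOrderedRing R]

theorem apply_eq_zero_of_commute_transpose {M : Matrix ι ι R} (hM : Commute M Mᵀ) (S : Set ι)
    (hS : ∀ r ∉ S, ∀ q ∈ S, M r q = 0) : ∀ m ∈ S, ∀ j ∉ S, M m j = 0 := by
  classical
  set s := univ.filter (· ∈ S) with hs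
  have hdiag : ∑ m ∈ s, ∑ r, M m r * M m r = ∑ m ∈ s, ∑ r, M r m * M r m := by
    simpa [mul_apply] using congrArg (fun X => ∑ m ∈ s, X m m) hM.eq
  have hcol : ∀ m ∈ s, ∑ r, M r m * M r m = ∑ r ∈ s, M r m * M r m := fun m hm =>
    (sum_subset (subset_univ _) fun r _ hr => by
      simp [hS r (by simpa [hs] using hr) m (by simpa [hs] using hm)]).symm
  have hoff : ∑ m ∈ s, ∑ r ∈ sᶜ, M m r * M m r = 0 := by
    rw [sum_congr rfl fun m _ => (sum_add_sum_compl s _).symm, sum_add_distrib,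
      sum_congr rfl hcol, sum_comm] at hdiag
    linarith
  intro m hm j hj
  have hrow := (sum_eq_zero_iff_of_nonneg fun m _ => sum_nonneg fun r _ => mul_self_nonneg _).mp
    hoff m (by simpa [hs] using hm)
  exact mul_self_eq_zero.mp
    ((sum_eq_zero_iff_of_nonneg fun r _ => mul_self_nonneg _).mp hrow j (by simpa [hs] using hj))

end Matrix

section StructureConstants

variable {K A ι : Type*} [CommRing K] [CommRing A] [Algebra K A] [Fintype ι]
  (b : Basis ι K A) {N : ι → ι → ι → ℤ}

def structConstMatrix (N : ι → ι → ι → ℤ) (i : ι) : Matrix ι ι ℤ :=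
  Matrix.of fun m r => N i r m

theorem repr_basis_mul_basis (hmul : ∀ i j, b i * b j = ∑ m, (N i j m : K) • b m) (i j m : ι) :
    b.repr (b i * b j) m = N i j m := by
  rw [hmul, b.repr_sum_self]

theorem structConst_comm [CharZero K] (hmul : ∀ i j, b i * b j = ∑ m, (N i j m : K) • b m)
    (i j m : ι) : N i j m = N j i m := by
  have h : (N i j m : K) = N j i m := by
    rw [← repr_basis_mul_basis b hmul, mul_comm, repr_basis_mul_basis b hmul]
  exact_mod_cast h

theorem leftMulMatrix_basis [DecidableEq ι]
    (hmul : ∀ i j, b i * b j = ∑ m, (N i j m : K) • b m) (i : ι) :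
    Algebra.leftMulMatrix b (b i) = (structConstMatrix N i).map (Int.castRingHom K) := by
  ext m r
  simp [Algebra.leftMulMatrix_eq_repr_mul, repr_basis_mul_basis b hmul, structConstMatrix]

theorem structConstMatrix_commute [DecidableEq ι] [CharZero K]
    (hmul : ∀ i j, b i * b j = ∑ m, (N i j m : K) • b m) (i k : ι) :
    Commute (structConstMatrix N i) (structConstMatrix N k) := by
  apply Matrix.map_injective (f := Int.castRingHom K) (RingHom.injective_int _)
  simp only [Matrix.map_mul, ← leftMulMatrix_basis b hmul, ← map_mul, mul_comm]

/-- Here `c r = τ (b r)` for the trace form `τ`, so `hτ` says `τ (b (σ i) * b j) = δᵢⱼ`. -/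
theorem repr_eq_sum_mul_repr_mul [DecidableEq ι]
    (hmul : ∀ i j, b i * b j = ∑ m, (N i j m : K) • b m) {c : ι → K} {σ : ι → ι}
    (hτ : ∀ i j, ∑ m, c m * (N (σ i) j m : K) = if i = j then 1 else 0) (x : A) (m : ι) :
    b.repr x m = ∑ r, c r * b.repr (b (σ m) * x) r := by
  have key : b.coord m = (∑ r, c r • b.coord r) ∘ₗ LinearMap.mulLeft K (b (σ m)) :=
    b.ext fun j => by
      simp [repr_basis_mul_basis b hmul, hτ, Finsupp.single_apply, eq_comm]
  simpa using LinearMap.congr_fun key x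

theorem structConst_rotate [DecidableEq ι] [CharZero K]
    (hmul : ∀ i j, b i * b j = ∑ m, (N i j m : K) • b m) {c : ι → K} {σ : ι → ι}
    (hσ : Function.Involutive σ)
    (hτ : ∀ i j, ∑ m, c m * (N (σ i) j m : K) = if i = j then 1 else 0) (i j m : ι) :
    N i j m = N (σ m) i (σ j) := by
  have hassoc : b (σ m) * (b i * b j) = b (σ (σ j)) * (b (σ m) * b i) := by
    rw [hσ]; ring
  have h : (N i j m : K) = N (σ m) i (σ j) := by
    rw [← repr_basis_mul_basis b hmul, ← repr_basis_mul_basis b hmul,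
      repr_eq_sum_mul_repr_mul b hmul hτ, repr_eq_sum_mul_repr_mul b hmul hτ (b (σ m) * b i),
      hassoc]
  exact_mod_cast h

theorem structConstMatrix_transpose [DecidableEq ι] [CharZero K]
    (hmul : ∀ i j, b i * b j = ∑ m, (N i j m : K) • b m) {c : ι → K} {σ : ι → ι}
    (hσ : Function.Involutive σ) (hσN : ∀ i j m, N (σ i) (σ j) m = N i j (σ m))
    (hτ : ∀ i j, ∑ m, c m * (N (σ i) j m : K) = if i = j then 1 else 0) (i : ι) :
    (structConstMatrix N i)ᵀ = structConstMatrix N (σ i) := by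
  ext m r
  simp only [Matrix.transpose_apply, structConstMatrix, Matrix.of_apply]
  rw [structConst_rotate b hmul hσ hτ (σ i) r m, hσN, hσ, structConst_comm b hmul m i]

theorem structConst_eq_zero_of_closed [CharZero K]
    (hmul : ∀ i j, b i * b j = ∑ m, (N i j m : K) • b m) {S : Set ι}
    (hS : ∀ x ∈ Submodule.span ℤ (b '' S), ∀ y ∈ Submodule.span ℤ (b '' S),
      x * y ∈ Submodule.span ℤ (b '' S))
    {p q r : ι} (hp : p ∈ S) (hq : q ∈ S) (hr : r ∉ S) : N p q r = 0 := by
  have hpq := Submodule.span_le_restrictScalars ℤ K _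
    (hS _ (Submodule.subset_span ⟨p, hp, rfl⟩) _ (Submodule.subset_span ⟨q, hq, rfl⟩))
  rw [Submodule.restrictScalars_mem, b.mem_span_image] at hpq
  by_contra h
  exact hr (hpq (by simp [Finsupp.mem_support_iff, repr_basis_mul_basis b hmul, h]))

theorem basis_mul_basis_mem_span (hmul : ∀ i j, b i * b j = ∑ m, (N i j m : K) • b m)
    {S : Set ι} {i j : ι} (h : ∀ m ∉ S, N i j m = 0) :
    b i * b j ∈ Submodule.span ℤ (b '' S) := by
  rw [hmul]
  refine Submodule.sum_mem _ fun m _ => ?_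
  by_cases hm : m ∈ S
  · rw [Int.cast_smul_eq_zsmul]
    exact Submodule.smul_mem _ _ (Submodule.subset_span ⟨m, hm, rfl⟩)
  · simp [h m hm]

end StructureConstants

theorem zBasedRng_complement_of_closed_subset_is_module_general
    {n : ℕ} (A : Type*) [CommRing A] [Algebra ℂ A]
    (b : Module.Basis (Fin n) ℂ A) (N : Fin n → Fin n → Fin n → ℤ) (σ : Fin n → Fin n)
    (hmul : ∀ i j, b i * b j = ∑ m, (N i j m : ℂ) • b m)
    (hσ : ∀ i, σ (σ i) = i)
    (hσN : ∀ i j m, N (σ i) (σ j) m = N i j (σ m))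
    (hτ : ∀ i j, (∑ m, (starRingEnd ℂ) (b.repr 1 m) * (N (σ i) j m : ℂ)) =
      if i = j then (1 : ℂ) else 0)
    (B' : Set (Fin n))
    (hclosed : ∀ x ∈ Submodule.span ℤ (⇑b '' B'), ∀ y ∈ Submodule.span ℤ (⇑b '' B'),
      x * y ∈ Submodule.span ℤ (⇑b '' B')) :
    ∀ i ∈ B', ∀ j ∉ B', b i * b j ∈ Submodule.span ℤ (⇑b '' B'ᶜ) := by
  intro i hi j hj
  have hnormal : Commute (structConstMatrix N i) (structConstMatrix N i)ᵀ := by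
    rw [structConstMatrix_transpose b hmul hσ hσN hτ]
    exact structConstMatrix_commute b hmul i (σ i)
  have hinvariant : ∀ r ∉ B', ∀ q ∈ B', structConstMatrix N i r q = 0 :=
    fun r hr q hq => structConst_eq_zero_of_closed b hmul hclosed hi hq hr
  refine basis_mul_basis_mem_span b hmul fun m hm => ?_
  exact apply_eq_zero_of_commute_transpose hnormal B' hinvariant m (by simpa using hm) j hj

/-- Let `(R,B)` be a `ℤ`-based rng and `B' ⊆ B` a closed
subset.  Then the `ℤ`-span of `B ∖ B'` is a module over the subring spanned by
`B'`: for every `i ∈ B'` and `j ∉ B'`, the product `b i * b j` lies in the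
`ℤ`-span of the basis elements outside `B'`. -/
theorem zBasedRng_complement_of_closed_subset_is_module
    {n : ℕ} (A : Type*) [CommRing A] [Algebra ℂ A]
    (b : Module.Basis (Fin n) ℂ A) (N : Fin n → Fin n → Fin n → ℤ) (σ : Fin n → Fin n)
    (hmul : ∀ i j, b i * b j = ∑ m, (N i j m : ℂ) • b m)
    (hσ : ∀ i, σ (σ i) = i)
    (hσN : ∀ i j m, N (σ i) (σ j) m = N i j (σ m))
    (hτ : ∀ i j, (∑ m, (starRingEnd ℂ) (b.repr 1 m) * (N (σ i) j m : ℂ)) =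
      if i = j then (1 : ℂ) else 0)
    (he : ∀ j, (starRingEnd ℂ) (b.repr 1 (σ j)) = b.repr 1 j)
    (B' : Set (Fin n))
    (hclosed : ∀ x ∈ Submodule.span ℤ (⇑b '' B'), ∀ y ∈ Submodule.span ℤ (⇑b '' B'),
      x * y ∈ Submodule.span ℤ (⇑b '' B')) :
    ∀ i ∈ B', ∀ j ∉ B', b i * b j ∈ Submodule.span ℤ (⇑b '' B'ᶜ) :=
  zBasedRng_complement_of_closed_subset_is_module_general A b N σ hmul hσ hσN hτ B' hclosed
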